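/- Let {f_t}_{t∈[0,1]} be a continuous full family of C¹ unimodal maps, let n be even, and let V be a periodic point component of G_n^{−1}(0) of period n with min{ per(x) : (t,x) ∈ V } = n/2. Then: (1) for any (t₁,p₁), (t₂,p₂) ∈ V with per(p₁) = per(p₂) = n, the shuffle classes satisfy [σ(p₁)] = [σ(p₂)]; (2) if (s,p) ∈ V, the orbit of p under f_s does not contain the critical point 0, and the minimal period of I(p,f_s) is n, then the minimal period of μ(I(p,f_s)) is n/2. -/

import Mathlib

/-- A `C¹` unimodal map: `f' > 0` on `(-∞,0)`, `f' < 0` on `(0,∞)`, `f' 0 = 0`. -/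
def Unimodal (f : ℝ → ℝ) : Prop :=
  ContDiff ℝ 1 f ∧ (∀ x < (0 : ℝ), 0 < deriv f x) ∧
    (∀ x > (0 : ℝ), deriv f x < 0) ∧ deriv f 0 = 0

/-- A `C¹` unimodal map is a horseshoe: it has exactly two fixed points, the left
one being `a`, and there are `a < a₁ < b₁ < b` with `f b = a`, `f a₁ = f b₁ = b`
and `|f'| > 1` on `[a,a₁] ∪ [b₁,b]`. -/
def Horseshoe (f : ℝ → ℝ) : Prop :=
  Unimodal f ∧ ∃ a c : ℝ, a < c ∧ {x : ℝ | f x = x} = {a, c} ∧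
    ∃ a₁ b₁ b : ℝ, a < a₁ ∧ a₁ < b₁ ∧ b₁ < b ∧ f b = a ∧ f a₁ = b ∧ f b₁ = b ∧
      ∀ x ∈ Set.Icc a a₁ ∪ Set.Icc b₁ b, 1 < |deriv f x|

/-- A continuous full family of `C¹` unimodal maps `f t`, `t ∈ [0,1]`:
`(t,x) ↦ f t x` and `(t,x) ↦ (f t)' x` are continuous on `[0,1] × ℝ`, each `f t`
is unimodal, `f 0` has no fixed point, `f 1` is a horseshoe, and there is `M > 0`
such that all fixed points of every `f t` lie in `[-M, M]`. -/
def ContFullFamily (f : ℝ → ℝ → ℝ) : Prop :=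
  (∀ t ∈ Set.Icc (0 : ℝ) 1, Unimodal (f t)) ∧
  ContinuousOn (fun p : ℝ × ℝ => f p.1 p.2) (Set.Icc (0 : ℝ) 1 ×ˢ Set.univ) ∧
  ContinuousOn (fun p : ℝ × ℝ => deriv (f p.1) p.2) (Set.Icc (0 : ℝ) 1 ×ˢ Set.univ) ∧
  (∀ x : ℝ, f 0 x ≠ x) ∧
  Horseshoe (f 1) ∧
  (∃ M > (0 : ℝ), ∀ t ∈ Set.Icc (0 : ℝ) 1, ∀ x : ℝ, f t x = x → x ∈ Set.Icc (-M) M)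

open scoped Classical in
/-- The quotient map `G_m` of the family: for odd `m`, `G_m (t,x) = f_t^m x - x`;
for even `m = 2n`, it is `(f_t^{2n} x - x)/(f_t^n x - x)` off the fixed-point set
of `f_t^n`, and `(f_t^n)' x + 1` on it. -/
noncomputable def Gmap (f : ℝ → ℝ → ℝ) (m : ℕ) (t x : ℝ) : ℝ :=
  if Odd m then (f t)^[m] x - x
  else if (f t)^[m / 2] x = x then deriv ((f t)^[m / 2]) x + 1
  else ((f t)^[m] x - x) / ((f t)^[m / 2] x - x)

/-- The zero set `G_m⁻¹(0) ⊆ [0,1] × ℝ`. -/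
def Zset (f : ℝ → ℝ → ℝ) (m : ℕ) : Set (ℝ × ℝ) :=
  {p : ℝ × ℝ | p.1 ∈ Set.Icc (0 : ℝ) 1 ∧ Gmap f m p.1 p.2 = 0}

/-- `V` is a periodic point component of period-`m` data: a connected component
of `G_m⁻¹(0)`. -/
def IsPPComponent (f : ℝ → ℝ → ℝ) (m : ℕ) (V : Set (ℝ × ℝ)) : Prop :=
  ∃ p ∈ Zset f m, V = connectedComponentIn (Zset f m) p

/-- The period of a periodic point component `V` is `n`: the maximum of the
minimal periods of its points is `n`. -/
def CompPeriod (f : ℝ → ℝ → ℝ) (V : Set (ℝ × ℝ)) (n : ℕ) : Prop :=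
  (∀ p ∈ V, Function.minimalPeriod (f p.1) p.2 ≤ n) ∧
  (∃ p ∈ V, Function.minimalPeriod (f p.1) p.2 = n)

/-- Admissible sequences are functions `ℕ → Bool`, with `false = L`, `true = R`.
`shiftSeq k A` is the `k`-fold shift `S^k A`. -/
def shiftSeq (k : ℕ) (A : ℕ → Bool) : ℕ → Bool := fun i => A (i + k)

/-- The block `A_0 ⋯ A_{n-1}` is even: it contains an even number of `R`'s. -/
def BlockEven (A : ℕ → Bool) (n : ℕ) : Prop :=
  Even ((Finset.range n).filter fun i => A i = true).card

/-- The order on admissible sequences: `A < B` iff at the first index `n` of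
disagreement, either `A_0 ⋯ A_{n-1}` is even and `A n = L < R = B n`, or it is
odd and `A n = R > L = B n`. -/
def SeqLT (A B : ℕ → Bool) : Prop :=
  ∃ n : ℕ, (∀ i < n, A i = B i) ∧ A n ≠ B n ∧
    ((BlockEven A n ∧ A n = false ∧ B n = true) ∨
     (¬ BlockEven A n ∧ A n = true ∧ B n = false))

def SeqLE (A B : ℕ → Bool) : Prop := SeqLT A B ∨ A = B

/-- `A` is maximal: `S^k A ≤ A` for all `k ≥ 0`. -/
def SeqMaximal (A : ℕ → Bool) : Prop := ∀ k : ℕ, SeqLE (shiftSeq k A) A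

/-- `A` is periodic of period `n > 0`. -/
def IsPeriodicSeq (A : ℕ → Bool) (n : ℕ) : Prop := 0 < n ∧ ∀ i, A (i + n) = A i

/-- The minimal period of `A` (and `0` if `A` is not periodic). -/
noncomputable def minPer (A : ℕ → Bool) : ℕ := sInf {n : ℕ | IsPeriodicSeq A n}

/-- Flip (`L ↔ R`) the symbol of `A` at every position congruent to `n - 1`
modulo `n`. -/
def flipAt (n : ℕ) (A : ℕ → Bool) : ℕ → Bool :=
  fun i => if i % n = n - 1 then !(A i) else A i

/-- The map `μ` on periodic admissible sequences: if `n` is the minimal period of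
`A` and `m` (with `0 ≤ m ≤ n-1`) is the unique integer such that `S^m A` is
maximal, then `μ A = S^{n-m} B`, where `B` is obtained from `S^m A` by flipping
the symbol at every position congruent to `n - 1` modulo `n`. -/
noncomputable def muSeq (A : ℕ → Bool) : ℕ → Bool :=
  shiftSeq (minPer A - sInf {m : ℕ | SeqMaximal (shiftSeq m A)})
    (flipAt (minPer A)
      (shiftSeq (sInf {m : ℕ | SeqMaximal (shiftSeq m A)}) A))

/-- The map `ν`: `ν A = μ A` if `per (μ A) = per A`, and `ν A = S^{per A / 2} A`
otherwise. -/
noncomputable def nuSeq (A : ℕ → Bool) : ℕ → Bool :=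
  if minPer (muSeq A) = minPer A then muSeq A else shiftSeq (minPer A / 2) A

open scoped Classical in
/-- The itinerary `I(x, f)` of a point whose orbit avoids `0`: the `i`-th symbol
is `R` (`true`) if `f^[i] x > 0` and `L` (`false`) if `f^[i] x < 0`. -/
noncomputable def itinerary (f : ℝ → ℝ) (x : ℝ) : ℕ → Bool :=
  fun i => if 0 < f^[i] x then true else false

/-- `p` and `q` (periodic points of minimal period `n` of `f` and `g`
respectively) have the same shuffle `σ(p) = σ(q)`: the orderings of their orbits
agree. -/
def SameShuffle (f g : ℝ → ℝ) (p q : ℝ) (n : ℕ) : Prop :=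
  ∀ i j : ℕ, i < n → j < n → (f^[i] p < f^[j] p ↔ g^[i] q < g^[j] q)

/-!
Write `n = 2k`. Every point of `V` is either a half point (`f_t^k x = x` and `(f_t^k)' x = -1`,
minimal period `k`) or a full point (minimal period `2k`). So orbit points `x_i, x_j` with
`i ≢ j (mod k)` never collide, and `x_i ≠ x_{i+k}` at full points. As `V` is connected, two signs
are constant along `V`: that of `x_i - x_j` for `i ≢ j (mod k)`, and that of the difference
quotient of `f_t` between `x_i` and `x_{i+k}`, which extends continuously by `f_t'(x_i) ≠ 0` to
half points.

(1) The second sign compares the order of the pair `x_{i+1}, x_{i+1+k}` with that of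
`x_i, x_{i+k}`, so the order of a full orbit is determined by the single bit `x_k < x_0`. The half
shift `(t, x) ↦ (t, f_t^k x)` maps `V` into itself and flips that bit.

(2) Comparing with a half point `q`, exactly one class of pairs `{x_i, x_{i+k}}` straddles the
critical point, and its images contain the maximum of the orbit. Reading the itinerary of `q` off
the signs of the difference quotients shows that it is `μ(I(p))`. Its minimal period is `k`: a
shorter one would make the block of length `k` even, hence `(f^k)'(q) > 0`.
-/

open Set Function Filter Topology

theorem Nat.add_sub_mod_eq_sub_one_iff {N m : ℕ} (hm : m < N) (i : ℕ) :
    (i + (N - m)) % N = N - 1 ↔ (i + 1) % N = m := by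
  have shift (a b c : ℕ) : a ≡ b [MOD N] ↔ a + c ≡ b + c [MOD N] :=
    ⟨fun h => h.add_right c, Nat.ModEq.add_right_cancel' c⟩
  calc (i + (N - m)) % N = N - 1 ↔ i + (N - m) ≡ N - 1 [MOD N] := by
        rw [Nat.ModEq, Nat.mod_eq_of_lt (show N - 1 < N by omega)]
    _ ↔ i + 1 + N ≡ m + N [MOD N] := by
        rw [shift _ _ (m + 1), show i + (N - m) + (m + 1) = i + 1 + N by omega,
          show N - 1 + (m + 1) = m + N by omega]
    _ ↔ (i + 1) % N = m := by rw [← shift, Nat.ModEq, Nat.mod_eq_of_lt hm]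

theorem Nat.ModEq.add_two_mul_or {k i j : ℕ} (h : i ≡ j [MOD k]) :
    i ≡ j [MOD 2 * k] ∨ i + k ≡ j [MOD 2 * k] := by
  obtain ⟨c, hc⟩ := Nat.modEq_iff_dvd.1 h
  rcases Int.even_or_odd' c with ⟨d, rfl | rfl⟩
  · exact Or.inl (Nat.modEq_iff_dvd.2 ⟨d, by push_cast; linarith⟩)
  · exact Or.inr (Nat.modEq_iff_dvd.2 ⟨d, by push_cast; linarith⟩)

theorem Function.IsPeriodicPt.iterate_eq_of_modEq {α : Type*} {g : α → α} {x : α} {n i j : ℕ}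
    (hx : IsPeriodicPt g n x) (h : i ≡ j [MOD n]) : g^[i] x = g^[j] x := by
  rw [← hx.iterate_mod_apply i, h, hx.iterate_mod_apply]

theorem Function.IsPeriodicPt.iterate_eq_or_of_modEq {α : Type*} {g : α → α} {x : α} {k i j : ℕ}
    (hx : IsPeriodicPt g (2 * k) x) (h : i ≡ j [MOD k]) :
    (g^[j] x = g^[i] x ∧ g^[j + k] x = g^[i + k] x) ∨
      (g^[j] x = g^[i + k] x ∧ g^[j + k] x = g^[i] x) := by
  rcases h.add_two_mul_or with h | h
  · exact Or.inl ⟨hx.iterate_eq_of_modEq h.symm, hx.iterate_eq_of_modEq (h.add_right k).symm⟩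
  · refine Or.inr ⟨hx.iterate_eq_of_modEq h.symm, hx.iterate_eq_of_modEq ?_⟩
    have := (h.add_right k).symm
    rwa [add_assoc, ← two_mul, Nat.ModEq, Nat.add_mod_right] at this

theorem Function.iterate_eq_iterate_iff_modEq {α : Type*} {g : α → α} {x : α}
    (hx : x ∈ periodicPts g) {i j : ℕ} : g^[i] x = g^[j] x ↔ i ≡ j [MOD minimalPeriod g x] := by
  have hpos := minimalPeriod_pos_of_mem_periodicPts hx
  rw [← iterate_mod_minimalPeriod_eq, ← iterate_mod_minimalPeriod_eq (n := j),
    iterate_eq_iterate_iff_of_lt_minimalPeriod (Nat.mod_lt _ hpos) (Nat.mod_lt _ hpos)]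
  rfl

theorem Function.IsPeriodicPt.max_iterate_add_eq {g : ℝ → ℝ} {x : ℝ} {k i j : ℕ}
    (hx : IsPeriodicPt g (2 * k) x) (h : i ≡ j [MOD k]) :
    max (g^[j] x) (g^[j + k] x) = max (g^[i] x) (g^[i + k] x) := by
  rcases hx.iterate_eq_or_of_modEq h with ⟨h₁, h₂⟩ | ⟨h₁, h₂⟩ <;> rw [h₁, h₂]
  exact max_comm _ _

theorem Function.IsPeriodicPt.mul_iterate_add_eq {g : ℝ → ℝ} {x : ℝ} {k i j : ℕ}
    (hx : IsPeriodicPt g (2 * k) x) (h : i ≡ j [MOD k]) :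
    g^[j] x * g^[j + k] x = g^[i] x * g^[i + k] x := by
  rcases hx.iterate_eq_or_of_modEq h with ⟨h₁, h₂⟩ | ⟨h₁, h₂⟩ <;> rw [h₁, h₂]
  exact mul_comm _ _

theorem mul_pos_iff_of_ne_zero {a b : ℝ} (ha : a ≠ 0) (hb : b ≠ 0) :
    0 < a * b ↔ (0 < a ↔ 0 < b) := by
  rcases ha.lt_or_gt with ha | ha <;> rcases hb.lt_or_gt with hb | hb <;>
    simp [mul_pos_iff, ha, hb, ha.not_gt, hb.not_gt]

theorem not_lt_iff_of_ne {a : ℝ} (ha : a ≠ 0) : ¬ a < 0 ↔ 0 < a :=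
  not_lt.trans ha.symm.le_iff_lt

theorem blockEven_succ (A : ℕ → Bool) (i : ℕ) :
    BlockEven A (i + 1) ↔ (BlockEven A i ↔ A i = false) := by
  unfold BlockEven
  rw [Finset.range_add_one, Finset.filter_insert]
  cases A i
  · simp
  · rw [if_pos rfl, Finset.card_insert_of_notMem (by simp), Nat.even_add_one]
    simp

theorem blockEven_congr {A B : ℕ → Bool} {r : ℕ} (h : ∀ i < r, A i = B i) :
    BlockEven A r ↔ BlockEven B r := by
  unfold BlockEven
  rw [Finset.filter_congr fun i hi => by rw [h i (Finset.mem_range.1 hi)]]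

theorem SeqLT.asymm {A B : ℕ → Bool} (hAB : SeqLT A B) : ¬ SeqLT B A := by
  rintro ⟨r', hag', hne', hcs'⟩
  obtain ⟨r, hag, hne, hcs⟩ := hAB
  rcases lt_trichotomy r r' with h | rfl | h
  · exact hne (hag' r h).symm
  · have hBE := blockEven_congr hag
    rcases hcs with ⟨he, ha, hb⟩ | ⟨he, ha, hb⟩ <;>
      rcases hcs' with ⟨he', ha', hb'⟩ | ⟨he', ha', hb'⟩ <;> simp_all
  · exact hne' (hag r' h).symm

theorem SeqLE.antisymm {A B : ℕ → Bool} (hAB : SeqLE A B) (hBA : SeqLE B A) : A = B := by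
  rcases hAB with hAB | rfl
  · rcases hBA with hBA | rfl
    · exact absurd hBA hAB.asymm
    · rfl
  · rfl

theorem shiftSeq_shiftSeq (a b : ℕ) (A : ℕ → Bool) :
    shiftSeq a (shiftSeq b A) = shiftSeq (a + b) A := by
  funext i
  simp [shiftSeq, add_assoc]

theorem minPer_le {A : ℕ → Bool} {m : ℕ} (h : IsPeriodicSeq A m) : minPer A ≤ m :=
  Nat.sInf_le h

theorem isPeriodicSeq_minPer {A : ℕ → Bool} (h : 0 < minPer A) : IsPeriodicSeq A (minPer A) :=
  Nat.sInf_mem (Nat.nonempty_of_pos_sInf h)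

theorem IsPeriodicSeq.of_shiftSeq_eq {A : ℕ → Bool} {N m m' : ℕ} (hA : IsPeriodicSeq A N)
    (hm : m < m') (hmN : m ≤ N) (h : shiftSeq m A = shiftSeq m' A) :
    IsPeriodicSeq A (m' - m) := by
  refine ⟨by omega, fun i => ?_⟩
  have := congrFun h (i + N - m)
  simp only [shiftSeq] at this
  rw [show i + N - m + m = i + N by omega, hA.2,
    show i + N - m + m' = i + (m' - m) + N by omega, hA.2] at this
  exact this.symm

theorem sInf_seqMaximal_shiftSeq {A : ℕ → Bool} {m₀ : ℕ} (hm₀ : m₀ < minPer A)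
    (hmax : SeqMaximal (shiftSeq m₀ A)) : sInf {m | SeqMaximal (shiftSeq m A)} = m₀ := by
  have hA := isPeriodicSeq_minPer (A := A) (by omega)
  refine le_antisymm (Nat.sInf_le hmax) (le_csInf ⟨m₀, hmax⟩ fun m hm => ?_)
  by_contra! hlt
  have h₁ : SeqLE (shiftSeq m₀ A) (shiftSeq m A) := by
    simpa only [shiftSeq_shiftSeq, Nat.sub_add_cancel hlt.le] using hm (m₀ - m)
  have h₂ : SeqLE (shiftSeq m A) (shiftSeq m₀ A) := by
    have h := hmax (minPer A - m₀ + m)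
    rwa [shiftSeq_shiftSeq, show minPer A - m₀ + m + m₀ = m + minPer A by omega,
      ← shiftSeq_shiftSeq, show shiftSeq (minPer A) A = A from funext hA.2] at h
  have := minPer_le (hA.of_shiftSeq_eq hlt (by omega) (h₂.antisymm h₁))
  omega

theorem muSeq_apply {A : ℕ → Bool} {m₀ : ℕ} (hm₀ : m₀ < minPer A)
    (hmax : SeqMaximal (shiftSeq m₀ A)) (i : ℕ) :
    muSeq A i = if (i + 1) % minPer A = m₀ then !A i else A i := by
  have hA := isPeriodicSeq_minPer (A := A) (by omega)
  simp only [muSeq, sInf_seqMaximal_shiftSeq hm₀ hmax, shiftSeq, flipAt,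
    Nat.add_sub_mod_eq_sub_one_iff hm₀, show i + (minPer A - m₀) + m₀ = i + minPer A by omega,
    hA.2]


section Itinerary

variable {g : ℝ → ℝ} {x y : ℝ}

theorem itinerary_eq_true_iff {i : ℕ} : itinerary g x i = true ↔ 0 < g^[i] x := by
  simp [itinerary]

theorem itinerary_eq_false_iff {i : ℕ} : itinerary g x i = false ↔ g^[i] x ≤ 0 := by
  simp [itinerary]

theorem itinerary_iterate (m : ℕ) : itinerary g (g^[m] x) = shiftSeq m (itinerary g x) := by
  funext i
  simp only [itinerary, shiftSeq, ← iterate_add_apply]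

theorem isPeriodicSeq_itinerary {m : ℕ} (hm : 0 < m) (h : IsPeriodicPt g m x) :
    IsPeriodicSeq (itinerary g x) m :=
  ⟨hm, fun i => by simp only [itinerary, iterate_add_apply, h.eq]⟩

theorem itinerary_eq_false_and_eq_true_of_lt {i : ℕ} (hne : itinerary g x i ≠ itinerary g y i)
    (hlt : g^[i] x < g^[i] y) : itinerary g x i = false ∧ itinerary g y i = true := by
  cases hx : itinerary g x i <;> cases hy : itinerary g y i
  · exact absurd (hx.trans hy.symm) hne
  · exact ⟨rfl, rfl⟩
  · linarith [itinerary_eq_true_iff.1 hx, itinerary_eq_false_iff.1 hy]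
  · exact absurd (hx.trans hy.symm) hne

theorem iterate_ne_of_lt_minPer {k : ℕ} (hk : 0 < k)
    (h : k < minPer (itinerary g x)) : g^[k] x ≠ x := fun he =>
  (minPer_le (isPeriodicSeq_itinerary hk he)).not_gt h

theorem exists_iterate_mul_iterate_add_neg {k : ℕ} (hk : 0 < k)
    (hx0 : ∀ i, g^[i] x ≠ 0) (h : k < minPer (itinerary g x)) :
    ∃ i, g^[i] x * g^[i + k] x < 0 := by
  by_contra! hpos
  have hper : IsPeriodicSeq (itinerary g x) k := ⟨hk, fun i => by
    simp only [itinerary, (pos_iff_pos_of_mul_pos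
      ((hpos i).lt_of_ne (mul_ne_zero (hx0 i) (hx0 (i + k))).symm)).symm]⟩
  exact (minPer_le hper).not_gt h

end Itinerary

namespace Unimodal

variable {g : ℝ → ℝ} (hg : Unimodal g)
include hg

theorem differentiable : Differentiable ℝ g := hg.1.differentiable one_ne_zero

theorem strictMonoOn : StrictMonoOn g (Iic 0) :=
  strictMonoOn_of_deriv_pos (convex_Iic 0) hg.1.continuous.continuousOn
    fun x hx => hg.2.1 x (by simpa using hx)

theorem strictAntiOn : StrictAntiOn g (Ici 0) :=
  strictAntiOn_of_deriv_neg (convex_Ici 0) hg.1.continuous.continuousOn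
    fun x hx => hg.2.2.1 x (by simpa using hx)

theorem deriv_pos_iff {x : ℝ} (hx : x ≠ 0) : 0 < deriv g x ↔ x < 0 := by
  rcases hx.lt_or_gt with hx | hx
  · exact iff_of_true (hg.2.1 x hx) hx
  · exact iff_of_false (hg.2.2.1 x hx).not_gt hx.not_gt

theorem deriv_ne_zero {x : ℝ} (hx : x ≠ 0) : deriv g x ≠ 0 := by
  rcases hx.lt_or_gt with hx | hx
  · exact (hg.2.1 x hx).ne'
  · exact (hg.2.2.1 x hx).ne

theorem iterate_lt_iterate_of_itinerary_eq {x y : ℝ} (hxy : x < y) :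
    ∀ r : ℕ, (∀ i < r, itinerary g x i = itinerary g y i) →
      (BlockEven (itinerary g x) r → g^[r] x < g^[r] y) ∧
      (¬ BlockEven (itinerary g x) r → g^[r] y < g^[r] x)
  | 0, _ => ⟨fun _ => hxy, fun h => absurd (by simp [BlockEven]) h⟩
  | r + 1, hag => by
    obtain ⟨ihe, iho⟩ := iterate_lt_iterate_of_itinerary_eq hxy r fun i hi => hag i (by omega)
    have hr := hag r (by omega)
    rw [iterate_succ_apply', iterate_succ_apply', blockEven_succ]
    cases hx : itinerary g x r
    · have hxr := itinerary_eq_false_iff.1 hx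
      have hyr := itinerary_eq_false_iff.1 (hr ▸ hx)
      exact ⟨fun h => hg.strictMonoOn hxr hyr (ihe (by simpa using h)),
        fun h => hg.strictMonoOn hyr hxr (iho (by simpa using h))⟩
    · have hxr := (itinerary_eq_true_iff.1 hx).le
      have hyr := (itinerary_eq_true_iff.1 (hr ▸ hx)).le
      exact ⟨fun h => hg.strictAntiOn hyr hxr (iho (by simpa using h)),
        fun h => hg.strictAntiOn hxr hyr (ihe (by simpa using h))⟩

theorem itinerary_seqLE {x y : ℝ} (hxy : x ≤ y) : SeqLE (itinerary g x) (itinerary g y) := by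
  classical
  rcases hxy.lt_or_eq with hxy | rfl
  swap
  · exact Or.inr rfl
  by_cases heq : itinerary g x = itinerary g y
  · exact Or.inr heq
  have hex : ∃ i, itinerary g x i ≠ itinerary g y i := by
    by_contra! h
    exact heq (funext h)
  have hag : ∀ i < Nat.find hex, itinerary g x i = itinerary g y i := fun i hi =>
    not_not.1 (Nat.find_min hex hi)
  have hne := Nat.find_spec hex
  obtain ⟨he, ho⟩ := hg.iterate_lt_iterate_of_itinerary_eq hxy _ hag
  refine Or.inl ⟨_, hag, hne, ?_⟩
  by_cases hb : BlockEven (itinerary g x) (Nat.find hex)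
  · exact Or.inl ⟨hb, itinerary_eq_false_and_eq_true_of_lt hne (he hb)⟩
  · obtain ⟨hy, hx⟩ := itinerary_eq_false_and_eq_true_of_lt (Ne.symm hne) (ho hb)
    exact Or.inr ⟨hb, hx, hy⟩

theorem blockEven_of_itinerary_eq {x y : ℝ} (hxy : x ≠ y) (h : itinerary g x = itinerary g y)
    {k : ℕ} (hx : g^[k] x = x) (hy : g^[k] y = y) : BlockEven (itinerary g x) k := by
  by_contra hb
  rcases hxy.lt_or_gt with hxy | hxy
  · have := (hg.iterate_lt_iterate_of_itinerary_eq hxy k fun i _ => congrFun h i).2 hb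
    rw [hx, hy] at this
    exact this.not_gt hxy
  · have := (hg.iterate_lt_iterate_of_itinerary_eq hxy k fun i _ => congrFun h.symm i).2
      (h ▸ hb)
    rw [hx, hy] at this
    exact this.not_gt hxy

theorem hasDerivAt_iterate (m : ℕ) (x : ℝ) :
    HasDerivAt g^[m] (∏ j ∈ Finset.range m, deriv g (g^[j] x)) x := by
  induction m with
  | zero => simpa using hasDerivAt_id x
  | succ m ih =>
    rw [Finset.prod_range_succ, mul_comm, iterate_succ']
    exact (hg.differentiable _).hasDerivAt.comp x ih

theorem iterate_ne_zero_of_deriv_iterate_ne_zero {m : ℕ} {x : ℝ} (h : deriv g^[m] x ≠ 0)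
    {j : ℕ} (hj : j < m) : g^[j] x ≠ 0 := by
  intro h0
  rw [(hg.hasDerivAt_iterate m x).deriv] at h
  exact h (Finset.prod_eq_zero (Finset.mem_range.2 hj) (by rw [h0]; exact hg.2.2.2))

theorem deriv_iterate_pos_iff {m : ℕ} {x : ℝ} (hx : ∀ j < m, g^[j] x ≠ 0) :
    0 < deriv g^[m] x ↔ BlockEven (itinerary g x) m := by
  rw [(hg.hasDerivAt_iterate m x).deriv]
  induction m with
  | zero => simp [BlockEven]
  | succ m ih =>
    have hm := hx m (by omega)
    have hprod : ∏ j ∈ Finset.range m, deriv g (g^[j] x) ≠ 0 :=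
      Finset.prod_ne_zero_iff.2 fun j hj => hg.deriv_ne_zero (hx j (by simp at hj; omega))
    rw [Finset.prod_range_succ, mul_pos_iff_of_ne_zero hprod (hg.deriv_ne_zero hm),
      ih fun j hj => hx j (by omega), hg.deriv_pos_iff hm, blockEven_succ,
      itinerary_eq_false_iff, hm.le_iff_lt]

theorem minPer_itinerary {x : ℝ} {k : ℕ} (hk : 0 < k)
    (hx : minimalPeriod g x = k) (hd : deriv g^[k] x < 0) (hx0 : ∀ j, g^[j] x ≠ 0) :
    minPer (itinerary g x) = k := by
  have hper : IsPeriodicPt g k x := hx ▸ isPeriodicPt_minimalPeriod g x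
  refine le_antisymm (minPer_le (isPeriodicSeq_itinerary hk hper))
    (le_csInf ⟨k, isPeriodicSeq_itinerary hk hper⟩ fun d hd' => ?_)
  by_contra! hdk
  have hne : g^[d] x ≠ x := fun he =>
    hd'.1.ne' ((iterate_eq_iterate_iff_of_lt_minimalPeriod (hx ▸ hdk) (hx ▸ hk)).1 he)
  have hitin : itinerary g x = itinerary g (g^[d] x) := by
    rw [itinerary_iterate]
    exact funext fun i => (hd'.2 i).symm
  have hb := hg.blockEven_of_itinerary_eq hne.symm hitin hper (hper.apply_iterate d)
  exact hd.not_gt ((hg.deriv_iterate_pos_iff fun j _ => hx0 j).2 hb)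

end Unimodal

theorem exists_mem_uIcc_deriv_eq_dslope {g : ℝ → ℝ} (hg : Differentiable ℝ g) (a b : ℝ) :
    ∃ c ∈ uIcc a b, deriv g c = dslope g a b := by
  rcases lt_trichotomy a b with hab | rfl | hab
  · obtain ⟨c, hc, hd⟩ := exists_deriv_eq_slope g hab hg.continuous.continuousOn
      hg.differentiableOn
    exact ⟨c, uIcc_of_le hab.le ▸ Ioo_subset_Icc_self hc,
      by rw [hd, dslope_of_ne _ hab.ne', slope_def_field]⟩
  · exact ⟨a, by simp, (dslope_same g a).symm⟩
  · obtain ⟨c, hc, hd⟩ := exists_deriv_eq_slope g hab hg.continuous.continuousOn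
      hg.differentiableOn
    exact ⟨c, uIcc_of_ge hab.le ▸ Ioo_subset_Icc_self hc,
      by rw [hd, dslope_of_ne _ hab.ne, slope_comm, slope_def_field]⟩

theorem dslope_pos_iff {g : ℝ → ℝ} {a b : ℝ} (hab : a ≠ b) (hgab : g a ≠ g b) :
    0 < dslope g a b ↔ (b < a ↔ g b < g a) := by
  rw [dslope_of_ne _ hab.symm, slope_def_field, div_pos_iff, sub_pos, sub_pos, sub_neg, sub_neg]
  rcases hab.lt_or_gt with h | h <;> rcases hgab.lt_or_gt with h' | h' <;>
    simp [h, h', h.not_gt, h'.not_gt]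

theorem IsPreconnected.pos_iff_pos {X : Type*} [TopologicalSpace X] {s : Set X}
    (hs : IsPreconnected s) {φ : X → ℝ} (hφ : ContinuousOn φ s) (h0 : ∀ x ∈ s, φ x ≠ 0)
    {x y : X} (hx : x ∈ s) (hy : y ∈ s) : 0 < φ x ↔ 0 < φ y := by
  suffices key : ∀ x ∈ s, ∀ y ∈ s, 0 < φ x → 0 < φ y from ⟨key x hx y hy, key y hy x hx⟩
  intro x hx y hy hpos
  by_contra! hneg
  obtain ⟨z, hz, hz0⟩ := hs.intermediate_value hy hx hφ ⟨hneg, hpos.le⟩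
  exact h0 z hz hz0

section Family

variable {T : Type*} [TopologicalSpace T] {F : T → ℝ → ℝ} {s : Set T}

theorem continuousOn_iterate_family (hF : ContinuousOn (fun p : T × ℝ => F p.1 p.2) (s ×ˢ univ))
    (m : ℕ) : ContinuousOn (fun p : T × ℝ => (F p.1)^[m] p.2) (s ×ˢ univ) := by
  induction m with
  | zero => exact continuousOn_snd
  | succ m ih =>
    simp only [iterate_succ_apply']
    exact hF.comp (continuousOn_fst.prodMk ih) fun p hp => ⟨hp.1, trivial⟩

theorem continuousOn_dslope_family (hd : ∀ t ∈ s, Differentiable ℝ (F t))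
    (hF : ContinuousOn (fun p : T × ℝ => F p.1 p.2) (s ×ˢ univ))
    (hF' : ContinuousOn (fun p : T × ℝ => deriv (F p.1) p.2) (s ×ˢ univ)) :
    ContinuousOn (fun p : T × ℝ × ℝ => dslope (F p.1) p.2.1 p.2.2) (s ×ˢ univ) := by
  rintro ⟨t, a, b⟩ ⟨ht, -⟩
  rcases eq_or_ne a b with rfl | hab
  · rw [ContinuousWithinAt, dslope_same, Metric.tendsto_nhds]
    intro ε hε
    have hF't := Metric.tendsto_nhds.1 (hF' (t, a) ⟨ht, trivial⟩) ε hε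
    rw [nhdsWithin_prod_eq, nhdsWithin_univ, eventually_prod_iff] at hF't
    obtain ⟨P, hP, Q, hQ, hPQ⟩ := hF't
    obtain ⟨δ, hδ, hball⟩ := Metric.eventually_nhds_iff_ball.1 hQ
    have hnear : ∀ᶠ p in 𝓝[s ×ˢ univ] (t, a, a),
        (p.1 ∈ s ∧ P p.1) ∧ p.2 ∈ Metric.ball a δ ×ˢ Metric.ball a δ := by
      rw [nhdsWithin_prod_eq, nhdsWithin_univ]
      exact (eventually_mem_nhdsWithin.and hP).prod_mk
        (prod_mem_nhds (Metric.ball_mem_nhds a hδ) (Metric.ball_mem_nhds a hδ))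
    filter_upwards [hnear] with ⟨t', a', b'⟩ ⟨⟨ht', hPt'⟩, ha', hb'⟩
    obtain ⟨c, hc, hdc⟩ := exists_mem_uIcc_deriv_eq_dslope (hd t' ht') a' b'
    rw [← hdc]
    rw [Real.ball_eq_Ioo] at ha' hb' hball
    exact hPQ hPt' (hball c (ordConnected_Ioo.uIcc_subset ha' hb' hc))
  · have hcont : ContinuousWithinAt
        (fun p : T × ℝ × ℝ => (F p.1 p.2.2 - F p.1 p.2.1) / (p.2.2 - p.2.1))
        (s ×ˢ univ) (t, a, b) := by
      have h2 (i : T × ℝ × ℝ → ℝ) (hi : Continuous i) :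
          ContinuousWithinAt (fun p => F p.1 (i p)) (s ×ˢ univ) (t, a, b) :=
        hF.comp (continuousOn_fst.prodMk hi.continuousOn) (fun p hp => ⟨hp.1, trivial⟩)
          (t, a, b) ⟨ht, trivial⟩
      exact ((h2 _ continuous_snd.snd).sub (h2 _ continuous_snd.fst)).div
        ((continuous_snd.snd.sub continuous_snd.fst).continuousWithinAt) (sub_ne_zero.2 hab.symm)
    refine hcont.congr_of_eventuallyEq ?_ ?_
    · have hne : {p : T × ℝ × ℝ | p.2.1 ≠ p.2.2} ∈ 𝓝 (t, a, b) :=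
        (isOpen_ne_fun continuous_snd.fst continuous_snd.snd).mem_nhds hab
      filter_upwards [nhdsWithin_le_nhds hne] with p hp
      rw [dslope_of_ne _ (Ne.symm hp), slope_def_field]
    · rw [dslope_of_ne _ hab.symm, slope_def_field]

end Family

theorem gmap_two_mul_eq_zero_iff {f : ℝ → ℝ → ℝ} {k : ℕ} {t x : ℝ} :
    Gmap f (2 * k) t x = 0 ↔ ((f t)^[k] x = x ∧ deriv (f t)^[k] x = -1) ∨
      ((f t)^[k] x ≠ x ∧ (f t)^[2 * k] x = x) := by
  simp only [Gmap, Nat.not_odd_iff_even.2 (even_two_mul k), if_false,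
    Nat.mul_div_cancel_left k two_pos]
  split_ifs with h
  · simp [h, add_eq_zero_iff_eq_neg]
  · simp [h, div_eq_zero_iff, sub_eq_zero]

/-- The setting of the theorem with `n = 2 * k`: `V` is a component of `G_{2k}⁻¹(0)` on which
every minimal period is at least `k`. -/
structure HalfPeriodComponent (f : ℝ → ℝ → ℝ) (k : ℕ) (V : Set (ℝ × ℝ)) : Prop where
  unimodal : ∀ t ∈ Icc (0 : ℝ) 1, Unimodal (f t)
  continuousOn : ContinuousOn (fun p : ℝ × ℝ => f p.1 p.2) (Icc 0 1 ×ˢ univ)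
  continuousOn_deriv : ContinuousOn (fun p : ℝ × ℝ => deriv (f p.1) p.2) (Icc 0 1 ×ˢ univ)
  isComponent : IsPPComponent f (2 * k) V
  le_minimalPeriod : ∀ v ∈ V, k ≤ minimalPeriod (f v.1) v.2

namespace HalfPeriodComponent

variable {f : ℝ → ℝ → ℝ} {k : ℕ} {V : Set (ℝ × ℝ)} (hV : HalfPeriodComponent f k V)
include hV

theorem subset_zset : V ⊆ Zset f (2 * k) := by
  obtain ⟨p, -, rfl⟩ := hV.isComponent
  exact connectedComponentIn_subset _ _

theorem isPreconnected : IsPreconnected V := by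
  obtain ⟨p, -, rfl⟩ := hV.isComponent
  exact isPreconnected_connectedComponentIn

theorem unimodal_of_mem {t x : ℝ} (hv : (t, x) ∈ V) : Unimodal (f t) :=
  hV.unimodal t (hV.subset_zset hv).1

theorem half_or_full {t x : ℝ} (hv : (t, x) ∈ V) :
    ((f t)^[k] x = x ∧ deriv (f t)^[k] x = -1) ∨ ((f t)^[k] x ≠ x ∧ (f t)^[2 * k] x = x) :=
  gmap_two_mul_eq_zero_iff.1 (hV.subset_zset hv).2

theorem pos : 0 < k := by
  obtain ⟨⟨t, x⟩, hp, rfl⟩ := hV.isComponent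
  rcases Nat.eq_zero_or_pos k with rfl | hk
  -- `G_0(t, x) = id' x + 1 = 2`
  · rcases hV.half_or_full (mem_connectedComponentIn hp) with ⟨-, h⟩ | ⟨h, -⟩ <;> norm_num at h
  · exact hk

theorem isPeriodicPt {t x : ℝ} (hv : (t, x) ∈ V) : IsPeriodicPt (f t) (2 * k) x := by
  rcases hV.half_or_full hv with ⟨h, -⟩ | ⟨-, h⟩
  · exact IsPeriodicPt.const_mul h 2
  · exact h

theorem mem_periodicPts {t x : ℝ} (hv : (t, x) ∈ V) : x ∈ periodicPts (f t) :=
  mk_mem_periodicPts (by have := hV.pos; omega) (hV.isPeriodicPt hv)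

theorem minimalPeriod_eq_of_iterate_eq {t x : ℝ} (hv : (t, x) ∈ V) (h : (f t)^[k] x = x) :
    minimalPeriod (f t) x = k :=
  le_antisymm (IsPeriodicPt.minimalPeriod_le hV.pos h) (hV.le_minimalPeriod _ hv)

theorem iterate_ne_of_minimalPeriod_eq {t x : ℝ} (hv : (t, x) ∈ V)
    (h : minimalPeriod (f t) x = 2 * k) : (f t)^[k] x ≠ x := fun he => by
  have := hV.minimalPeriod_eq_of_iterate_eq hv he
  have := hV.pos
  omega

theorem minimalPeriod_eq_of_iterate_ne {t x : ℝ} (hv : (t, x) ∈ V) (h : (f t)^[k] x ≠ x) :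
    minimalPeriod (f t) x = 2 * k := by
  have hk := hV.le_minimalPeriod _ hv
  obtain ⟨c, hc⟩ := (hV.isPeriodicPt hv).minimalPeriod_dvd
  rcases c with _ | _ | c
  · have := hV.pos
    omega
  · simpa using hc.symm
  · refine absurd ?_ h
    have hmin : minimalPeriod (f t) x = k := by simp only at hk; nlinarith
    exact hmin ▸ iterate_minimalPeriod

theorem dvd_minimalPeriod {t x : ℝ} (hv : (t, x) ∈ V) : k ∣ minimalPeriod (f t) x := by
  by_cases h : (f t)^[k] x = x
  · rw [hV.minimalPeriod_eq_of_iterate_eq hv h]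
  · rw [hV.minimalPeriod_eq_of_iterate_ne hv h]
    exact Dvd.intro_left 2 rfl

theorem iterate_ne_iterate {t x : ℝ} (hv : (t, x) ∈ V) {i j : ℕ} (hij : i % k ≠ j % k) :
    (f t)^[i] x ≠ (f t)^[j] x := fun he =>
  hij (((iterate_eq_iterate_iff_modEq (hV.mem_periodicPts hv)).1 he).of_dvd
    (hV.dvd_minimalPeriod hv))

theorem iterate_add_ne_iterate {t x : ℝ} (hv : (t, x) ∈ V) (h : (f t)^[k] x ≠ x) (i : ℕ) :
    (f t)^[i + k] x ≠ (f t)^[i] x := fun he => by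
  rw [iterate_eq_iterate_iff_modEq (hV.mem_periodicPts hv),
    hV.minimalPeriod_eq_of_iterate_ne hv h] at he
  have := Nat.ModEq.add_left_cancel' i (show i + k ≡ i + 0 [MOD 2 * k] by rwa [add_zero])
  rw [Nat.ModEq, Nat.zero_mod, Nat.mod_eq_of_lt (by have := hV.pos; omega)] at this
  exact hV.pos.ne' this

theorem deriv_iterate_eq_of_half {t x : ℝ} (hv : (t, x) ∈ V) (h : (f t)^[k] x = x) :
    deriv (f t)^[k] x = -1 :=
  ((hV.half_or_full hv).resolve_right fun h' => h'.1 h).2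

theorem iterate_ne_zero_of_half {t x : ℝ} (hv : (t, x) ∈ V) (h : (f t)^[k] x = x) (j : ℕ) :
    (f t)^[j] x ≠ 0 := by
  have hd : deriv (f t)^[k] x ≠ 0 := by norm_num [hV.deriv_iterate_eq_of_half hv h]
  rw [← (show IsPeriodicPt (f t) k x from h).iterate_mod_apply]
  exact (hV.unimodal_of_mem hv).iterate_ne_zero_of_deriv_iterate_ne_zero hd
    (Nat.mod_lt _ hV.pos)

theorem minPer_itinerary_of_half {s y : ℝ} (hw : (s, y) ∈ V) (hy : (f s)^[k] y = y) :
    minPer (itinerary (f s) y) = k :=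
  (hV.unimodal_of_mem hw).minPer_itinerary hV.pos (hV.minimalPeriod_eq_of_iterate_eq hw hy)
    (by rw [hV.deriv_iterate_eq_of_half hw hy]; norm_num) (hV.iterate_ne_zero_of_half hw hy)

theorem continuousOn_iterate (i : ℕ) : ContinuousOn (fun v : ℝ × ℝ => (f v.1)^[i] v.2) V :=
  (continuousOn_iterate_family hV.continuousOn i).mono fun _ hv => ⟨(hV.subset_zset hv).1, trivial⟩

theorem iterate_lt_iterate_iff {t x s y : ℝ} (hv : (t, x) ∈ V) (hw : (s, y) ∈ V) {i j : ℕ}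
    (hij : i % k ≠ j % k) : (f t)^[i] x < (f t)^[j] x ↔ (f s)^[i] y < (f s)^[j] y := by
  have := hV.isPreconnected.pos_iff_pos
    ((hV.continuousOn_iterate j).sub (hV.continuousOn_iterate i))
    (fun v hv => sub_ne_zero.2 (hV.iterate_ne_iterate hv (Ne.symm hij))) hv hw
  simpa only [Pi.sub_apply, sub_pos] using this

theorem dslope_iterate_ne_zero {t x : ℝ} (hv : (t, x) ∈ V) (i : ℕ) :
    dslope (f t) ((f t)^[i] x) ((f t)^[i + k] x) ≠ 0 := by
  rcases hV.half_or_full hv with ⟨h, -⟩ | ⟨h, -⟩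
  · rw [iterate_add_apply, h, dslope_same]
    exact (hV.unimodal_of_mem hv).deriv_ne_zero (hV.iterate_ne_zero_of_half hv h i)
  · have hne := hV.iterate_add_ne_iterate hv h
    have hne' := hne (i + 1)
    rw [add_right_comm, iterate_succ_apply', iterate_succ_apply'] at hne'
    rw [dslope_of_ne _ (hne i), slope_def_field]
    exact div_ne_zero (sub_ne_zero.2 hne') (sub_ne_zero.2 (hne i))

theorem dslope_iterate_pos_iff {t x s y : ℝ} (hv : (t, x) ∈ V) (hw : (s, y) ∈ V) (i : ℕ) :
    0 < dslope (f t) ((f t)^[i] x) ((f t)^[i + k] x) ↔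
      0 < dslope (f s) ((f s)^[i] y) ((f s)^[i + k] y) := by
  have hcont : ContinuousOn
      (fun v : ℝ × ℝ => dslope (f v.1) ((f v.1)^[i] v.2) ((f v.1)^[i + k] v.2)) V :=
    (continuousOn_dslope_family (fun t ht => (hV.unimodal t ht).differentiable) hV.continuousOn
      hV.continuousOn_deriv).comp
      (continuousOn_fst.prodMk
        ((hV.continuousOn_iterate i).prodMk (hV.continuousOn_iterate (i + k))))
      fun v hv => ⟨(hV.subset_zset hv).1, trivial⟩
  exact hV.isPreconnected.pos_iff_pos hcont (fun v hv => hV.dslope_iterate_ne_zero hv i) hv hw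

theorem dslope_iterate_pos_iff_of_half {t x s y : ℝ} (hv : (t, x) ∈ V) (hw : (s, y) ∈ V)
    (hy : (f s)^[k] y = y) (i : ℕ) :
    0 < dslope (f t) ((f t)^[i] x) ((f t)^[i + k] x) ↔ (f s)^[i] y < 0 := by
  rw [hV.dslope_iterate_pos_iff hv hw, iterate_add_apply, hy, dslope_same,
    (hV.unimodal_of_mem hw).deriv_pos_iff (hV.iterate_ne_zero_of_half hw hy i)]

theorem dslope_iterate_pos_iff_of_full {t x : ℝ} (hv : (t, x) ∈ V) (h : (f t)^[k] x ≠ x)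
    (i : ℕ) : 0 < dslope (f t) ((f t)^[i] x) ((f t)^[i + k] x) ↔
      ((f t)^[i + k] x < (f t)^[i] x ↔ (f t)^[i + 1 + k] x < (f t)^[i + 1] x) := by
  have hne := hV.iterate_add_ne_iterate hv h
  have hne' := hne (i + 1)
  rw [add_right_comm, iterate_succ_apply', iterate_succ_apply'] at hne' ⊢
  exact dslope_pos_iff (hne i).symm (Ne.symm hne')

theorem mk_iterate_mem {s y t x : ℝ} (hw : (s, y) ∈ V) (hy : (f s)^[k] y = y)
    (hv : (t, x) ∈ V) : (t, (f t)^[k] x) ∈ V := by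
  set Φ : ℝ × ℝ → ℝ × ℝ := fun v => (v.1, (f v.1)^[k] v.2)
  have hmaps : MapsTo Φ V (Zset f (2 * k)) := by
    rintro ⟨t, x⟩ hv
    by_cases h : (f t)^[k] x = x
    · simpa [Φ, h] using hV.subset_zset hv
    refine ⟨(hV.subset_zset hv).1, gmap_two_mul_eq_zero_iff.2
      (Or.inr ⟨?_, (hV.isPeriodicPt hv).apply_iterate k⟩)⟩
    rw [← iterate_add_apply, ← two_mul, hV.isPeriodicPt hv]
    exact Ne.symm h
  have hVy : V = connectedComponentIn (Zset f (2 * k)) (s, y) := by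
    obtain ⟨p, -, rfl⟩ := hV.isComponent
    exact connectedComponentIn_eq hw
  have hsub : Φ '' V ⊆ connectedComponentIn (Zset f (2 * k)) (s, y) :=
    (hV.isPreconnected.image Φ (continuousOn_fst.prodMk (hV.continuousOn_iterate k))
      ).subset_connectedComponentIn ⟨(s, y), hw, by simp [Φ, hy]⟩ (image_subset_iff.2 hmaps)
  rw [hVy]
  exact hsub ⟨(t, x), hv, rfl⟩

theorem iterate_lt_iterate_iff_of_full {t₁ x₁ t₂ x₂ : ℝ} (hv₁ : (t₁, x₁) ∈ V)
    (hv₂ : (t₂, x₂) ∈ V) (h₁ : (f t₁)^[k] x₁ ≠ x₁) (h₂ : (f t₂)^[k] x₂ ≠ x₂)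
    (h : (f t₁)^[k] x₁ < x₁ ↔ (f t₂)^[k] x₂ < x₂) (i j : ℕ) :
    (f t₁)^[i] x₁ < (f t₁)^[j] x₁ ↔ (f t₂)^[i] x₂ < (f t₂)^[j] x₂ := by
  have hpair : ∀ i, ((f t₁)^[i + k] x₁ < (f t₁)^[i] x₁ ↔ (f t₂)^[i + k] x₂ < (f t₂)^[i] x₂) := by
    intro i
    induction i with
    | zero => simpa using h
    | succ i ih =>
      have := hV.dslope_iterate_pos_iff hv₁ hv₂ i
      rw [hV.dslope_iterate_pos_iff_of_full hv₁ h₁, hV.dslope_iterate_pos_iff_of_full hv₂ h₂,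
        ih] at this
      tauto
  by_cases hij : i % k = j % k
  · rcases Nat.ModEq.add_two_mul_or hij with hij | hij
    · rw [(hV.isPeriodicPt hv₁).iterate_eq_of_modEq hij,
        (hV.isPeriodicPt hv₂).iterate_eq_of_modEq hij, lt_self_iff_false, lt_self_iff_false]
    · rw [← (hV.isPeriodicPt hv₁).iterate_eq_of_modEq hij,
        ← (hV.isPeriodicPt hv₂).iterate_eq_of_modEq hij,
        ← (hV.iterate_add_ne_iterate hv₁ h₁ i).symm.le_iff_lt,
        ← (hV.iterate_add_ne_iterate hv₂ h₂ i).symm.le_iff_lt, ← not_lt, ← not_lt, hpair i]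
  · exact hV.iterate_lt_iterate_iff hv₁ hv₂ hij

theorem sameShuffle_or {s y t₁ x₁ t₂ x₂ : ℝ} (hw : (s, y) ∈ V) (hy : (f s)^[k] y = y)
    (hv₁ : (t₁, x₁) ∈ V) (hv₂ : (t₂, x₂) ∈ V) (hp₁ : minimalPeriod (f t₁) x₁ = 2 * k)
    (hp₂ : minimalPeriod (f t₂) x₂ = 2 * k) :
    SameShuffle (f t₁) (f t₂) x₁ x₂ (2 * k) ∨
      SameShuffle (f t₁) (f t₂) ((f t₁)^[k] x₁) x₂ (2 * k) := by
  have h₁ := hV.iterate_ne_of_minimalPeriod_eq hv₁ hp₁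
  have h₂ := hV.iterate_ne_of_minimalPeriod_eq hv₂ hp₂
  by_cases h : (f t₁)^[k] x₁ < x₁ ↔ (f t₂)^[k] x₂ < x₂
  · exact Or.inl fun i j _ _ => hV.iterate_lt_iterate_iff_of_full hv₁ hv₂ h₁ h₂ h i j
  · have hx₁ : (f t₁)^[k] ((f t₁)^[k] x₁) = x₁ := by
      rw [← iterate_add_apply, ← two_mul]
      exact hV.isPeriodicPt hv₁
    refine Or.inr fun i j _ _ => hV.iterate_lt_iterate_iff_of_full (hV.mk_iterate_mem hw hy hv₁)
      hv₂ (by rwa [hx₁, ne_comm]) h₂ ?_ i j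
    rw [hx₁, ← h₁.symm.le_iff_lt, ← not_lt]
    tauto

section HalfPoint

variable {s y t x : ℝ} (hw : (s, y) ∈ V) (hy : (f s)^[k] y = y) (hv : (t, x) ∈ V)
include hw hy hv

theorem iterate_add_lt_iff {i j : ℕ} (hij : i % k ≠ j % k) :
    (f t)^[i + k] x < (f t)^[j] x ↔ (f t)^[i] x < (f t)^[j] x := by
  rw [hV.iterate_lt_iterate_iff hv hw (by rwa [Nat.add_mod_right]),
    hV.iterate_lt_iterate_iff hv hw hij, iterate_add_apply, hy]

theorem lt_iterate_add_iff {i j : ℕ} (hij : i % k ≠ j % k) :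
    (f t)^[j] x < (f t)^[i + k] x ↔ (f t)^[j] x < (f t)^[i] x := by
  rw [hV.iterate_lt_iterate_iff hv hw (by rwa [Nat.add_mod_right, ne_comm]),
    hV.iterate_lt_iterate_iff hv hw (Ne.symm hij), iterate_add_apply, hy]

theorem mod_eq_of_mul_neg {i j : ℕ} (hi : (f t)^[i] x * (f t)^[i + k] x < 0)
    (hj : (f t)^[j] x * (f t)^[j + k] x < 0) : i % k = j % k := by
  by_contra hij
  wlog h : (f t)^[i] x < (f t)^[j] x generalizing i j
  · exact this hj hi (Ne.symm hij) ((hV.iterate_ne_iterate hv (Ne.symm hij)).lt_of_le (not_lt.1 h))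
  have h₁ := (hV.iterate_add_lt_iff hw hy hv hij).2 h
  have h₂ := (hV.lt_iterate_add_iff hw hy hv (Ne.symm hij)).2 h
  have h₃ := (hV.lt_iterate_add_iff hw hy hv (i := j) (j := i + k)
    (by rwa [Nat.add_mod_right, ne_comm])).2 h₁
  rcases mul_neg_iff.1 hi with ⟨_, _⟩ | ⟨_, _⟩ <;> rcases mul_neg_iff.1 hj with ⟨_, _⟩ | ⟨_, _⟩ <;>
    linarith

theorem iterate_succ_lt_max {i l : ℕ} (hi : (f t)^[i] x * (f t)^[i + k] x < 0)
    (hl : l % k ≠ i % k) :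
    (f t)^[l + 1] x < max ((f t)^[i + 1] x) ((f t)^[i + 1 + k] x) := by
  have hg := hV.unimodal_of_mem hv
  rw [iterate_succ_apply', iterate_succ_apply', add_right_comm, iterate_succ_apply']
  rcases (hV.iterate_ne_iterate hv hl).lt_or_gt with h | h
  · have h' := (hV.lt_iterate_add_iff hw hy hv (Ne.symm hl)).2 h
    rcases mul_neg_iff.1 hi with ⟨-, h₀⟩ | ⟨h₀, -⟩
    · exact lt_max_of_lt_right (hg.strictMonoOn (by simp; linarith) (by simp; linarith) h')
    · exact lt_max_of_lt_left (hg.strictMonoOn (by simp; linarith) (by simp; linarith) h)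
  · have h' := (hV.iterate_add_lt_iff hw hy hv (Ne.symm hl)).2 h
    rcases mul_neg_iff.1 hi with ⟨h₀, -⟩ | ⟨-, h₀⟩
    · exact lt_max_of_lt_left (hg.strictAntiOn (by simp; linarith) (by simp; linarith) h)
    · exact lt_max_of_lt_right (hg.strictAntiOn (by simp; linarith) (by simp; linarith) h')

theorem iterate_le_max {i : ℕ} (hi : (f t)^[i] x * (f t)^[i + k] x < 0) (m : ℕ) :
    (f t)^[m] x ≤ max ((f t)^[i + 1] x) ((f t)^[i + 1 + k] x) := by
  have hle : (f t)^[m + 2 * k - 1 + 1] x ≤ max ((f t)^[i + 1] x) ((f t)^[i + 1 + k] x) := by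
    by_cases hl : (m + 2 * k - 1) % k = i % k
    · rw [← (hV.isPeriodicPt hv).max_iterate_add_eq (Nat.ModEq.add_right 1 hl.symm)]
      exact le_max_left _ _
    · exact (hV.iterate_succ_lt_max hw hy hv hi hl).le
  rwa [Nat.sub_add_cancel (by have := hV.pos; omega), iterate_add_apply,
    hV.isPeriodicPt hv] at hle

theorem iterate_succ_eq_max_iff (hx : (f t)^[k] x ≠ x) {i : ℕ}
    (hi : (f t)^[i] x * (f t)^[i + k] x < 0) (l : ℕ) :
    (f t)^[l + 1] x = max ((f t)^[i + 1] x) ((f t)^[i + 1 + k] x) ↔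
      l % k = i % k ∧ (f t)^[l + 1 + k] x < (f t)^[l + 1] x := by
  constructor
  · intro hM
    by_cases hl : l % k = i % k
    · rw [← (hV.isPeriodicPt hv).max_iterate_add_eq (Nat.ModEq.add_right 1 hl.symm)] at hM
      exact ⟨hl, (max_eq_left_iff.1 hM.symm).lt_of_ne (hV.iterate_add_ne_iterate hv hx _)⟩
    · exact absurd hM (hV.iterate_succ_lt_max hw hy hv hi hl).ne
  · rintro ⟨hl, hlt⟩
    rw [← (hV.isPeriodicPt hv).max_iterate_add_eq (Nat.ModEq.add_right 1 hl.symm)]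
    exact (max_eq_left hlt.le).symm

theorem itinerary_half_apply (hx : (f t)^[k] x ≠ x) (hx0 : ∀ i, (f t)^[i] x ≠ 0) {i : ℕ}
    (hi : (f t)^[i] x * (f t)^[i + k] x < 0) (l : ℕ) :
    itinerary (f s) y l = if (f t)^[l + 1] x = max ((f t)^[i + 1] x) ((f t)^[i + 1 + k] x)
      then !itinerary (f t) x l else itinerary (f t) x l := by
  have hd := hV.dslope_iterate_pos_iff_of_half hv hw hy l
  have hy0 := hV.iterate_ne_zero_of_half hw hy l
  by_cases hl : l % k = i % k
  -- The pair `x_l, x_{l+k}` straddles `0`, and the image pair is ordered as the flip condition.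
  · have hl' : (f t)^[l] x * (f t)^[l + k] x < 0 :=
      (hV.isPeriodicPt hv).mul_iterate_add_eq hl.symm ▸ hi
    have hside : (f t)^[l + k] x < (f t)^[l] x ↔ 0 < (f t)^[l] x := by
      rcases mul_neg_iff.1 hl' with ⟨h₀, h₁⟩ | ⟨h₀, h₁⟩
      · exact iff_of_true (by linarith) h₀
      · exact iff_of_false (by linarith) (by linarith)
    rw [hV.dslope_iterate_pos_iff_of_full hv hx, hside] at hd
    simp only [hV.iterate_succ_eq_max_iff hw hy hv hx hi, hl, true_and]
    rw [Bool.eq_iff_iff, itinerary_eq_true_iff, ← not_lt_iff_of_ne hy0, ← hd]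
    split_ifs <;> simp only [Bool.not_eq_true', itinerary_eq_false_iff, itinerary_eq_true_iff,
      ← not_lt] <;> tauto
  -- The pair lies on one side of `0`, hence so does the mean value point `c`.
  · rw [if_neg (hV.iterate_succ_lt_max hw hy hv hi hl).ne]
    have hl' : 0 < (f t)^[l] x * (f t)^[l + k] x :=
      (not_lt.1 fun h => hl (hV.mod_eq_of_mul_neg hw hy hv h hi)).lt_of_ne
        (mul_ne_zero (hx0 l) (hx0 (l + k))).symm
    obtain ⟨c, hc, hdc⟩ := exists_mem_uIcc_deriv_eq_dslope
      (hV.unimodal_of_mem hv).differentiable ((f t)^[l] x) ((f t)^[l + k] x)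
    rw [← hdc] at hd
    suffices 0 < (f s)^[l] y ↔ 0 < (f t)^[l] x by simp only [itinerary, this]
    rw [mem_uIcc] at hc
    rcases pos_and_pos_or_neg_and_neg_of_mul_pos hl' with ⟨h₀, h₁⟩ | ⟨h₀, h₁⟩
    · have hc0 : 0 < c := by rcases hc with hc | hc <;> linarith
      rw [(hV.unimodal_of_mem hv).deriv_pos_iff hc0.ne', iff_false_intro hc0.not_gt,
        false_iff, not_lt_iff_of_ne hy0] at hd
      exact iff_of_true hd h₀
    · have hc0 : c < 0 := by rcases hc with hc | hc <;> linarith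
      rw [(hV.unimodal_of_mem hv).deriv_pos_iff hc0.ne, iff_true_intro hc0, true_iff] at hd
      exact iff_of_false hd.not_gt h₀.not_gt

theorem muSeq_itinerary (hx0 : ∀ i, (f t)^[i] x ≠ 0)
    (hA : minPer (itinerary (f t) x) = 2 * k) : muSeq (itinerary (f t) x) = itinerary (f s) y := by
  have hk := hV.pos
  have hx := iterate_ne_of_lt_minPer hk (by omega : k < minPer (itinerary (f t) x))
  obtain ⟨i, hi⟩ := exists_iterate_mul_iterate_add_neg hk hx0 (by omega : k < minPer _)
  set M := max ((f t)^[i + 1] x) ((f t)^[i + 1 + k] x)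
  have hper := hV.isPeriodicPt hv
  obtain ⟨m₀, hm₀, hxm₀⟩ : ∃ m₀ < 2 * k, (f t)^[m₀] x = M := by
    rcases max_choice ((f t)^[i + 1] x) ((f t)^[i + 1 + k] x) with h | h
    · exact ⟨(i + 1) % (2 * k), Nat.mod_lt _ (by omega), (hper.iterate_mod_apply _).trans h.symm⟩
    · exact ⟨(i + 1 + k) % (2 * k), Nat.mod_lt _ (by omega),
        (hper.iterate_mod_apply _).trans h.symm⟩
  have hmax : SeqMaximal (shiftSeq m₀ (itinerary (f t) x)) := fun j => by
    rw [shiftSeq_shiftSeq, ← itinerary_iterate, ← itinerary_iterate]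
    exact (hV.unimodal_of_mem hv).itinerary_seqLE (hxm₀ ▸ hV.iterate_le_max hw hy hv hi _)
  have hmp := hV.minimalPeriod_eq_of_iterate_ne hv hx
  have hflip (l : ℕ) : (l + 1) % (2 * k) = m₀ ↔ (f t)^[l + 1] x = M := by
    rw [← hxm₀, ← hper.iterate_mod_apply (l + 1),
      iterate_eq_iterate_iff_of_lt_minimalPeriod (hmp ▸ Nat.mod_lt _ (by omega)) (hmp ▸ hm₀)]
  funext l
  rw [muSeq_apply (hA ▸ hm₀) hmax, hV.itinerary_half_apply hw hy hv hx hx0 hi, hA]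
  simp only [hflip]
  rfl

end HalfPoint

end HalfPeriodComponent

theorem stmt13_general (f : ℝ → ℝ → ℝ) (hf : ContFullFamily f)
    (n : ℕ) (hneven : Even n)
    (V : Set (ℝ × ℝ)) (hV : IsPPComponent f n V)
    (hmin : IsLeast {j : ℕ | ∃ p ∈ V, Function.minimalPeriod (f p.1) p.2 = j}
      (n / 2)) :
    (∀ t₁ p₁ t₂ p₂ : ℝ, (t₁, p₁) ∈ V → (t₂, p₂) ∈ V →
      Function.minimalPeriod (f t₁) p₁ = n →
      Function.minimalPeriod (f t₂) p₂ = n →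
      (SameShuffle (f t₁) (f t₂) p₁ p₂ n ∨
        SameShuffle (f t₁) (f t₂) ((f t₁)^[n / 2] p₁) p₂ n)) ∧
    (∀ s p : ℝ, (s, p) ∈ V → (∀ i : ℕ, (f s)^[i] p ≠ 0) →
      minPer (itinerary (f s) p) = n →
      2 * minPer (muSeq (itinerary (f s) p)) = n) := by
  obtain ⟨k, rfl⟩ := hneven.two_dvd
  rw [Nat.mul_div_cancel_left k two_pos] at hmin ⊢
  have hV' : HalfPeriodComponent f k V :=
    ⟨hf.1, hf.2.1, hf.2.2.1, hV, fun v hv => hmin.2 ⟨v, hv, rfl⟩⟩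
  obtain ⟨⟨s₀, q⟩, hqV, hqk⟩ := hmin.1
  have hq : (f s₀)^[k] q = q := hqk ▸ iterate_minimalPeriod
  refine ⟨fun t₁ p₁ t₂ p₂ h₁ h₂ hp₁ hp₂ => hV'.sameShuffle_or hqV hq h₁ h₂ hp₁ hp₂,
    fun s p hv h0 hA => ?_⟩
  rw [hV'.muSeq_itinerary hqV hq hv h0 hA, hV'.minPer_itinerary_of_half hqV hq]

/-- Let `n` be even and `V` a periodic point component of
`G_n⁻¹(0)` of period `n` with `min { per x | (t,x) ∈ V } = n/2`.  Then:
(1) any two points `(t₁,p₁), (t₂,p₂) ∈ V` whose minimal periods are `n` have the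
same shuffle class (the shuffle of `p₂` equals that of `p₁` or that of
`f_{t₁}^{n/2} p₁`, the latter realizing the `n/2`-shift `γ(σ(p₁))`);
(2) if `(s,p) ∈ V`, the orbit of `p` avoids the critical point `0`, and the
minimal period of `I(p, f_s)` is `n`, then the minimal period of `μ(I(p, f_s))`
is `n/2`. -/
theorem stmt13 (f : ℝ → ℝ → ℝ) (hf : ContFullFamily f)
    (n : ℕ) (hn : 0 < n) (hneven : Even n)
    (V : Set (ℝ × ℝ)) (hV : IsPPComponent f n V) (hVper : CompPeriod f V n)
    (hmin : IsLeast {j : ℕ | ∃ p ∈ V, Function.minimalPeriod (f p.1) p.2 = j}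
      (n / 2)) :
    (∀ t₁ p₁ t₂ p₂ : ℝ, (t₁, p₁) ∈ V → (t₂, p₂) ∈ V →
      Function.minimalPeriod (f t₁) p₁ = n →
      Function.minimalPeriod (f t₂) p₂ = n →
      (SameShuffle (f t₁) (f t₂) p₁ p₂ n ∨
        SameShuffle (f t₁) (f t₂) ((f t₁)^[n / 2] p₁) p₂ n)) ∧
    (∀ s p : ℝ, (s, p) ∈ V → (∀ i : ℕ, (f s)^[i] p ≠ 0) →
      minPer (itinerary (f s) p) = n →
      2 * minPer (muSeq (itinerary (f s) p)) = n) :=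
  stmt13_general f hf n hneven V hV hmin
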